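/- (Corrected form of Proposition 1, equation for ω.) Let D⁰ = {x⁰₊ₖ, x⁰₋ₖ}ₖ₌₁^K and D¹ = {x¹₊ₖ, x¹₋ₖ}ₖ₌₁^K be two K-shot task datasets, and suppose that at the evaluation point the two logits agree on every sample of both datasets, i.e. (η₀ − η₁)·z̄(x) = 0 for every sample x (so the softmax output is (1/2,1/2) on every sample). Then the gradient with respect to the filter ω of the difference of task losses satisfies, for every entry (a,b) with 0 ≤ a,b ≤ M−1: ∂(L_{D⁰} − L_{D¹})/∂ω_{ab} = (1/(2K)) Σₖ₌₁^K Σ_{l₁=0}^{L−M} Σ_{l₂=0}^{L−M} (η₀ − η₁)_{(l₁,l₂)} · ( (x¹₊ₖ − x⁰₊ₖ) + (x⁰₋ₖ − x¹₋ₖ) )_{(l₁+a)(l₂+b)}. -/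

import Mathlib

open scoped InnerProductSpace

/-- Binary softmax, first component. -/
noncomputable def p0 (u0 u1 : ℝ) : ℝ := Real.exp u0 / (Real.exp u0 + Real.exp u1)

/-- Binary softmax, second component. -/
noncomputable def p1 (u0 u1 : ℝ) : ℝ := Real.exp u1 / (Real.exp u0 + Real.exp u1)

/-- Cross-entropy loss ℓ(u; y) = −y₀ log p₀(u) − y₁ log p₁(u), with label (y0, y1)
and logits (u0, u1). -/
noncomputable def xent (y0 y1 u0 u1 : ℝ) : ℝ :=
  -(y0 * Real.log (p0 u0 u1)) - y1 * Real.log (p1 u0 u1)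

/-- The valid index l + a ∈ Fin L, for l ∈ Fin (L−M+1) and a ∈ Fin M with M ≤ L. -/
def idx {L M : ℕ} (hL : M ≤ L) (l : Fin (L - M + 1)) (a : Fin M) : Fin L :=
  ⟨l.val + a.val, by have h1 := l.isLt; have h2 := a.isLt; omega⟩

/-- Row-major flattening of an L×L image, indexed by pairs. -/
def flat {L : ℕ} (x : Fin L → Fin L → ℝ) : EuclideanSpace ℝ (Fin L × Fin L) :=
  WithLp.toLp 2 (fun m => x m.1 m.2)

/-- The sparse Toeplitz matrix D_ω representing the valid convolution with filter ω. -/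
noncomputable def Dmat {L M : ℕ} (hM : 1 ≤ M) (hL : M ≤ L) (ω : Fin M × Fin M → ℝ) :
    Matrix (Fin (L - M + 1) × Fin (L - M + 1)) (Fin L × Fin L) ℝ :=
  fun l m =>
    if h : l.1.val ≤ m.1.val ∧ m.1.val - l.1.val ≤ M - 1 ∧
        l.2.val ≤ m.2.val ∧ m.2.val - l.2.val ≤ M - 1 then
      ω (⟨m.1.val - l.1.val, by omega⟩, ⟨m.2.val - l.2.val, by omega⟩)
    else 0

/-- The flattened feature map z̄(x) = D_ω x̄. -/
noncomputable def zbar {L M : ℕ} (hM : 1 ≤ M) (hL : M ≤ L) (ω : Fin M × Fin M → ℝ)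
    (x : Fin L → Fin L → ℝ) : EuclideanSpace ℝ (Fin (L - M + 1) × Fin (L - M + 1)) :=
  WithLp.toLp 2 ((Dmat hM hL ω).mulVec (flat x))

/-- Task loss of a K-shot dataset with positive samples xp (label (1,0)) and negative
samples xm (label (0,1)): L_D = (1/K) Σₖ ( ℓ(xpₖ; (1,0)) + ℓ(xmₖ; (0,1)) ), where the
logits of a sample x are (η₀·z̄(x), η₁·z̄(x)). -/
noncomputable def taskLoss {L M K : ℕ} (hM : 1 ≤ M) (hL : M ≤ L) (ω : Fin M × Fin M → ℝ)
    (xp xm : Fin K → Fin L → Fin L → ℝ)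
    (η0 η1 : EuclideanSpace ℝ (Fin (L - M + 1) × Fin (L - M + 1))) : ℝ :=
  (1 / (K : ℝ)) * ∑ k : Fin K,
    (xent 1 0 ⟪η0, zbar hM hL ω (xp k)⟫_ℝ ⟪η1, zbar hM hL ω (xp k)⟫_ℝ +
     xent 0 1 ⟪η0, zbar hM hL ω (xm k)⟫_ℝ ⟪η1, zbar hM hL ω (xm k)⟫_ℝ)

/-!
The logits are linear in the filter: `⟪η, z̄(x)⟫ = Σ_p ω_p Σ_l η_l x_{l+p}`, so
`∂/∂ω_{ab} ⟪η, z̄(x)⟫ = Σ_l η_l x_{l+(a,b)}`. The gradient of the cross-entropy is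
`(p − y)·u'`, and where the two logits agree the softmax is `(1/2, 1/2)`; hence a positive
sample contributes `−½ Σ_l (η₀ − η₁)_l x_{l+(a,b)}` and a negative one `+½` of the same.
Averaging over the samples of `D⁰` and subtracting those of `D¹` gives the formula.
-/

open Finset

theorem hasDerivAt_sum_update_mul {ι : Type*} [Fintype ι] [DecidableEq ι] (ω c : ι → ℝ)
    (q : ι) (t : ℝ) :
    HasDerivAt (fun s => ∑ p, Function.update ω q s p * c p) (c q) t := by
  have hterm : ∀ p, HasDerivAt (fun s => Function.update ω q s p * c p)
      (if p = q then c p else 0) t := by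
    intro p
    by_cases hp : p = q
    · subst hp
      simpa using (hasDerivAt_id t).mul_const (c p)
    · simpa [hp, Function.update_of_ne hp] using hasDerivAt_const t (ω p * c p)
  simpa using HasDerivAt.fun_sum (u := univ) fun p _ => hterm p

section CrossEntropy

variable {u0 u1 : ℝ → ℝ} {c0 c1 t : ℝ}

theorem xent_eq_log_add_exp (y0 y1 u0 u1 : ℝ) :
    xent y0 y1 u0 u1 =
      (y0 + y1) * Real.log (Real.exp u0 + Real.exp u1) - (y0 * u0 + y1 * u1) := by
  have hS : Real.exp u0 + Real.exp u1 ≠ 0 := by positivity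
  simp only [xent, p0, p1, Real.log_div (Real.exp_ne_zero _) hS, Real.log_exp]
  ring

theorem p0_self (u : ℝ) : p0 u u = 1 / 2 := by
  have := Real.exp_pos u
  rw [p0]; field_simp; ring

theorem p1_self (u : ℝ) : p1 u u = 1 / 2 := by
  have := Real.exp_pos u
  rw [p1]; field_simp; ring

theorem HasDerivAt.log_exp_add_exp (h0 : HasDerivAt u0 c0 t) (h1 : HasDerivAt u1 c1 t) :
    HasDerivAt (fun s => Real.log (Real.exp (u0 s) + Real.exp (u1 s)))
      (p0 (u0 t) (u1 t) * c0 + p1 (u0 t) (u1 t) * c1) t := by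
  have hS : Real.exp (u0 t) + Real.exp (u1 t) ≠ 0 := by positivity
  refine ((h0.exp.add h1.exp).log hS).congr_deriv ?_
  simp only [p0, p1, Pi.add_apply]
  field_simp

/-- At a point where the two logits agree, the softmax is `(1/2, 1/2)`, so the gradient
`(p − y)·u'` of the cross-entropy becomes `(y₁ − y₀)(u₀' − u₁')/2`. -/
theorem HasDerivAt.xent_of_eq (y0 y1 : ℝ) (h0 : HasDerivAt u0 c0 t)
    (h1 : HasDerivAt u1 c1 t) (heq : u0 t = u1 t) :
    HasDerivAt (fun s => xent y0 y1 (u0 s) (u1 s)) ((y1 - y0) / 2 * (c0 - c1)) t := by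
  simp only [xent_eq_log_add_exp]
  have h := ((h0.log_exp_add_exp h1).const_mul (y0 + y1)).sub
    ((h0.const_mul y0).add (h1.const_mul y1))
  rw [heq, p0_self, p1_self] at h
  exact h.congr_deriv (by ring)

end CrossEntropy

section Convolution

variable {L M : ℕ} (hM : 1 ≤ M) (hL : M ≤ L)

theorem idx_injective (l : Fin (L - M + 1)) : Function.Injective (idx hL l) :=
  fun a b h => Fin.ext (by simpa [idx] using h)

theorem Dmat_apply_idx (ω : Fin M × Fin M → ℝ) (l : Fin (L - M + 1) × Fin (L - M + 1))
    (p : Fin M × Fin M) :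
    Dmat hM hL ω l (idx hL l.1 p.1, idx hL l.2 p.2) = ω p := by
  have := p.1.isLt; have := p.2.isLt
  rw [Dmat, dif_pos (by simp only [idx]; omega)]
  congr <;> simp [idx]

theorem Dmat_apply_eq_zero (ω : Fin M × Fin M → ℝ) (l : Fin (L - M + 1) × Fin (L - M + 1))
    {m : Fin L × Fin L} (hm : ∀ p : Fin M × Fin M, (idx hL l.1 p.1, idx hL l.2 p.2) ≠ m) :
    Dmat hM hL ω l m = 0 := by
  rw [Dmat, dif_neg]
  rintro ⟨h1, h2, h3, h4⟩
  refine hm (⟨m.1.val - l.1.val, by omega⟩, ⟨m.2.val - l.2.val, by omega⟩) ?_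
  ext <;> simp only [idx] <;> omega

theorem Dmat_mulVec_flat (ω : Fin M × Fin M → ℝ) (x : Fin L → Fin L → ℝ)
    (l : Fin (L - M + 1) × Fin (L - M + 1)) :
    (Dmat hM hL ω).mulVec (flat x) l =
      ∑ p : Fin M × Fin M, ω p * x (idx hL l.1 p.1) (idx hL l.2 p.2) := by
  symm
  refine Fintype.sum_of_injective (fun p => (idx hL l.1 p.1, idx hL l.2 p.2))
    ((idx_injective hL l.1).prodMap (idx_injective hL l.2)) _ _ ?_ ?_
  · intro m hm
    dsimp only
    rw [Dmat_apply_eq_zero hM hL ω l fun p hp => hm ⟨p, hp⟩, zero_mul]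
  · intro p
    dsimp only
    rw [Dmat_apply_idx]
    rfl

theorem inner_zbar (ω : Fin M × Fin M → ℝ) (x : Fin L → Fin L → ℝ)
    (η : EuclideanSpace ℝ (Fin (L - M + 1) × Fin (L - M + 1))) :
    ⟪η, zbar hM hL ω x⟫_ℝ =
      ∑ p : Fin M × Fin M, ω p * ∑ l, η l * x (idx hL l.1 p.1) (idx hL l.2 p.2) := by
  simp only [PiLp.inner_apply, RCLike.inner_apply, conj_trivial, zbar, Dmat_mulVec_flat,
    mul_sum, sum_mul]
  rw [sum_comm]
  exact sum_congr rfl fun p _ => sum_congr rfl fun l _ => by ring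

end Convolution

section Loss

variable {L M : ℕ} (hM : 1 ≤ M) (hL : M ≤ L)

theorem hasDerivAt_inner_zbar_update (ω : Fin M × Fin M → ℝ) (x : Fin L → Fin L → ℝ)
    (η : EuclideanSpace ℝ (Fin (L - M + 1) × Fin (L - M + 1))) (q : Fin M × Fin M)
    (t : ℝ) :
    HasDerivAt (fun s => ⟪η, zbar hM hL (Function.update ω q s) x⟫_ℝ)
      (∑ l, η l * x (idx hL l.1 q.1) (idx hL l.2 q.2)) t := by
  simp only [inner_zbar]
  exact hasDerivAt_sum_update_mul ω _ q t

theorem hasDerivAt_xent_zbar_update (y0 y1 : ℝ) (ω : Fin M × Fin M → ℝ)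
    (x : Fin L → Fin L → ℝ) (η0 η1 : EuclideanSpace ℝ (Fin (L - M + 1) × Fin (L - M + 1)))
    (q : Fin M × Fin M) (hx : ⟪η0 - η1, zbar hM hL ω x⟫_ℝ = 0) :
    HasDerivAt
      (fun s => xent y0 y1 ⟪η0, zbar hM hL (Function.update ω q s) x⟫_ℝ
        ⟪η1, zbar hM hL (Function.update ω q s) x⟫_ℝ)
      ((y1 - y0) / 2 * ∑ l, (η0 - η1) l * x (idx hL l.1 q.1) (idx hL l.2 q.2)) (ω q) := by
  have heq : ⟪η0, zbar hM hL (Function.update ω q (ω q)) x⟫_ℝ =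
      ⟪η1, zbar hM hL (Function.update ω q (ω q)) x⟫_ℝ := by
    rw [Function.update_eq_self, ← sub_eq_zero, ← inner_sub_left, hx]
  refine ((hasDerivAt_inner_zbar_update hM hL ω x η0 q _).xent_of_eq y0 y1
    (hasDerivAt_inner_zbar_update hM hL ω x η1 q _) heq).congr_deriv ?_
  simp only [PiLp.sub_apply, sub_mul, sum_sub_distrib]

theorem hasDerivAt_taskLoss_update {K : ℕ} (ω : Fin M × Fin M → ℝ)
    (xp xm : Fin K → Fin L → Fin L → ℝ)
    (η0 η1 : EuclideanSpace ℝ (Fin (L - M + 1) × Fin (L - M + 1))) (q : Fin M × Fin M)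
    (hp : ∀ k, ⟪η0 - η1, zbar hM hL ω (xp k)⟫_ℝ = 0)
    (hm : ∀ k, ⟪η0 - η1, zbar hM hL ω (xm k)⟫_ℝ = 0) :
    HasDerivAt (fun s => taskLoss hM hL (Function.update ω q s) xp xm η0 η1)
      (1 / (2 * (K : ℝ)) * ∑ k, ∑ l, (η0 - η1) l *
        (xm k (idx hL l.1 q.1) (idx hL l.2 q.2) - xp k (idx hL l.1 q.1) (idx hL l.2 q.2)))
      (ω q) := by
  refine ((HasDerivAt.fun_sum fun k _ =>
    (hasDerivAt_xent_zbar_update hM hL 1 0 ω (xp k) η0 η1 q (hp k)).add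
      (hasDerivAt_xent_zbar_update hM hL 0 1 ω (xm k) η0 η1 q (hm k))).const_mul
        (1 / (K : ℝ))).congr_deriv ?_
  rw [mul_sum, mul_sum]
  refine sum_congr rfl fun k _ => ?_
  simp only [mul_sub, sum_sub_distrib]
  ring

end Loss

/-- Corrected form of Proposition 1, equation for the filter ω: if at the evaluation
point the two logits agree on every sample of both datasets (so the softmax output is
(1/2,1/2) on every sample), then for every filter entry (a,b),
∂(L_{D⁰} − L_{D¹})/∂ω_{ab} =
(1/(2K)) Σₖ Σ_{l₁,l₂} (η₀ − η₁)_{(l₁,l₂)} ((x¹₊ₖ − x⁰₊ₖ) + (x⁰₋ₖ − x¹₋ₖ))_{(l₁+a)(l₂+b)}. -/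
theorem prop1_filter (L M K : ℕ) (hM : 1 ≤ M) (hL : M ≤ L)
    (ω : Fin M × Fin M → ℝ)
    (x0p x0m x1p x1m : Fin K → Fin L → Fin L → ℝ)
    (η0 η1 : EuclideanSpace ℝ (Fin (L - M + 1) × Fin (L - M + 1)))
    (h0p : ∀ k, ⟪η0 - η1, zbar hM hL ω (x0p k)⟫_ℝ = 0)
    (h0m : ∀ k, ⟪η0 - η1, zbar hM hL ω (x0m k)⟫_ℝ = 0)
    (h1p : ∀ k, ⟪η0 - η1, zbar hM hL ω (x1p k)⟫_ℝ = 0)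
    (h1m : ∀ k, ⟪η0 - η1, zbar hM hL ω (x1m k)⟫_ℝ = 0)
    (a b : Fin M) :
    HasDerivAt
      (fun t : ℝ =>
        taskLoss hM hL (Function.update ω (a, b) t) x0p x0m η0 η1 -
          taskLoss hM hL (Function.update ω (a, b) t) x1p x1m η0 η1)
      ((1 / (2 * (K : ℝ))) * ∑ k : Fin K,
        ∑ l1 : Fin (L - M + 1), ∑ l2 : Fin (L - M + 1),
          (η0 - η1) (l1, l2) *
            ((x1p k (idx hL l1 a) (idx hL l2 b) - x0p k (idx hL l1 a) (idx hL l2 b)) +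
             (x0m k (idx hL l1 a) (idx hL l2 b) - x1m k (idx hL l1 a) (idx hL l2 b))))
      (ω (a, b)) := by
  refine ((hasDerivAt_taskLoss_update hM hL ω x0p x0m η0 η1 (a, b) h0p h0m).sub
    (hasDerivAt_taskLoss_update hM hL ω x1p x1m η0 η1 (a, b) h1p h1m)).congr_deriv ?_
  rw [← mul_sub, ← sum_sub_distrib]
  congr 1
  refine sum_congr rfl fun k _ => ?_
  rw [← sum_sub_distrib, Fintype.sum_prod_type]
  exact sum_congr rfl fun l1 _ => sum_congr rfl fun l2 _ => by ring
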